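/- arXiv:2109.03436 — 3 statements merged into one kernel-verified Lean document; each statement's English description precedes it below -/
import Mathlib

section
/- Let f be C² and m-strongly convex with Hessian bounded by M. With d the Newton direction at u and λ² the Newton decrement, min over t ∈ [0,1] of f(u+td) is at most f(u) - (m/(2M))λ². -/
open RealInnerProductSpace

theorem newton_line_min_decrease {n : ℕ} (f : EuclideanSpace ℝ (Fin n) → ℝ)
    (m M : ℝ) (hm : 0 < m) (hmM : m ≤ M) (hf : ContDiff ℝ 2 f)
    (hess : ∀ u v : EuclideanSpace ℝ (Fin n),
      m * ‖v‖ ^ 2 ≤ ⟪fderiv ℝ (gradient f) u v, v⟫ ∧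
      ⟪fderiv ℝ (gradient f) u v, v⟫ ≤ M * ‖v‖ ^ 2)
    (u d : EuclideanSpace ℝ (Fin n))
    (hd : fderiv ℝ (gradient f) u d = - gradient f u) :
    ∃ t ∈ Set.Icc (0 : ℝ) 1,
      f (u + t • d) ≤ f u - (m / (2 * M)) * (-⟪gradient f u, d⟫) := by
  have hM : 0 < M := lt_of_lt_of_le hm hmM
  have hfd : Differentiable ℝ f := hf.differentiable two_ne_zero
  have hGd : Differentiable ℝ (gradient f) := by
    have h1 : ContDiff ℝ 1 (fderiv ℝ f) := hf.fderiv_right (by norm_num)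
    exact (((InnerProductSpace.toDual ℝ
      (EuclideanSpace ℝ (Fin n))).symm.contDiff).comp h1).differentiable one_ne_zero
  set L : ℝ := ⟪gradient f u, d⟫ with hLdef
  set C : ℝ := M * ‖d‖ ^ 2 with hCdef
  -- the line
  have hγ : ∀ t : ℝ, HasDerivAt (fun s : ℝ => u + s • d) d t := by
    intro t
    simpa using ((hasDerivAt_id t).smul_const d).const_add u
  -- first derivative along the line
  have hφ : ∀ t : ℝ, HasDerivAt (fun s => f (u + s • d))
      ⟪gradient f (u + t • d), d⟫ t := by
    intro t
    have h1 : HasDerivAt (fun s => f (u + s • d)) (fderiv ℝ f (u + t • d) d) t :=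
      (hfd (u + t • d)).hasFDerivAt.comp_hasDerivAt t (hγ t)
    have h2 : fderiv ℝ f (u + t • d) d = ⟪gradient f (u + t • d), d⟫ := by
      simp [gradient, InnerProductSpace.toDual_apply_apply]
    rwa [h2] at h1
  -- derivative of the (first derivative) function
  have hψ : ∀ t : ℝ, HasDerivAt (fun s => ⟪gradient f (u + s • d), d⟫)
      ⟪fderiv ℝ (gradient f) (u + t • d) d, d⟫ t := by
    intro t
    have h1 : HasDerivAt (fun s => gradient f (u + s • d))
        (fderiv ℝ (gradient f) (u + t • d) d) t :=
      (hGd (u + t • d)).hasFDerivAt.comp_hasDerivAt (l := gradient f) t (hγ t)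
    simpa using h1.inner ℝ (hasDerivAt_const t d)
  have hψ0 : ⟪gradient f (u + (0 : ℝ) • d), d⟫ = L := by simp [hLdef]
  -- ρ t = ψ t - C t is antitone
  have hρ : ∀ t : ℝ, HasDerivAt (fun s => ⟪gradient f (u + s • d), d⟫ - C * s)
      (⟪fderiv ℝ (gradient f) (u + t • d) d, d⟫ - C) t := by
    intro t
    exact (hψ t).sub (by simpa using (hasDerivAt_id t).const_mul C)
  have hρanti : Antitone (fun s => ⟪gradient f (u + s • d), d⟫ - C * s) := by
    apply antitone_of_deriv_nonpos
    · exact fun t => (hρ t).differentiableAt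
    · intro t
      rw [(hρ t).deriv]
      have := (hess (u + t • d) d).2
      linarith
  -- ψ bound for t ≥ 0
  have hψle : ∀ t : ℝ, 0 ≤ t → ⟪gradient f (u + t • d), d⟫ ≤ L + C * t := by
    intro t ht
    have := hρanti ht
    simp only [hψ0] at this
    linarith [this]
  -- η t = f(u+td) - L t - (C/2) t² is antitone on [0,∞)
  have hη : ∀ t : ℝ, HasDerivAt (fun s => f (u + s • d) - L * s - C / 2 * s ^ 2)
      (⟪gradient f (u + t • d), d⟫ - L - C * t) t := by
    intro t
    have h1 : HasDerivAt (fun s : ℝ => L * s) L t := by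
      simpa using (hasDerivAt_id t).const_mul L
    have h2 : HasDerivAt (fun s : ℝ => C / 2 * s ^ 2) (C * t) t := by
      have := (hasDerivAt_pow 2 t).const_mul (C / 2)
      refine this.congr_deriv ?_
      ring
    exact ((hφ t).sub h1).sub h2
  have hηanti : AntitoneOn (fun s => f (u + s • d) - L * s - C / 2 * s ^ 2)
      (Set.Ici (0 : ℝ)) := by
    apply antitoneOn_of_deriv_nonpos (convex_Ici 0)
    · exact fun t _ => ((hη t).differentiableAt).continuousAt.continuousWithinAt
    · exact fun t _ => (hη t).differentiableAt.differentiableWithinAt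
    · intro t ht
      rw [interior_Ici] at ht
      rw [(hη t).deriv]
      have := hψle t (le_of_lt ht)
      linarith
  -- Taylor-type upper bound
  have taylor : ∀ t : ℝ, 0 ≤ t → f (u + t • d) ≤ f u + L * t + C / 2 * t ^ 2 := by
    intro t ht
    have h := hηanti (Set.self_mem_Ici) (Set.mem_Ici.mpr ht) ht
    simp only [zero_smul, add_zero, mul_zero] at h
    have h0 : (0:ℝ)^2 = 0 := by norm_num
    rw [h0, mul_zero] at h
    linarith
  by_cases hd0 : d = 0
  · refine ⟨0, ⟨le_refl 0, zero_le_one⟩, ?_⟩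
    have hL0 : L = 0 := by rw [hLdef, hd0]; simp
    simp [hd0, hL0]
  · -- d ≠ 0
    have hdn : 0 < ‖d‖ ^ 2 := pow_pos (norm_pos_iff.mpr hd0) 2
    have hC0 : 0 < C := by positivity
    set lsq : ℝ := -L with hlsqdef
    have hfd2 : ⟪fderiv ℝ (gradient f) u d, d⟫ = lsq := by
      rw [hd, hlsqdef, hLdef]
      simp
    have hml : m * ‖d‖ ^ 2 ≤ lsq := by
      have := (hess u d).1; rwa [hfd2] at this
    have hlC : lsq ≤ C := by
      have := (hess u d).2; rwa [hfd2] at this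
    have hlsq0 : 0 < lsq := lt_of_lt_of_le (by positivity) hml
    refine ⟨lsq / C, ⟨by positivity, by
      rw [div_le_one hC0]; exact hlC⟩, ?_⟩
    have ht0 : (0:ℝ) ≤ lsq / C := by positivity
    have h1 := taylor (lsq / C) ht0
    have h2 : L * (lsq / C) + C / 2 * (lsq / C) ^ 2 = -(lsq ^ 2 / (2 * C)) := by
      rw [hlsqdef]
      field_simp
      ring
    have h3 : m / (2 * M) * lsq ≤ lsq ^ 2 / (2 * C) := by
      rw [div_mul_eq_mul_div, div_le_div_iff₀ (by positivity) (by positivity), hCdef]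
      nlinarith [mul_le_mul_of_nonneg_right hml hlsq0.le]
    rw [hlsqdef] at h1 h2 h3
    linarith
end

section
/- Let f be C² with L-Lipschitz Hessian, d the Newton direction at u, and λ² = dᵀ∇²f(u)d the Newton decrement. Then for g̃(t) = dᵀ∇f(u+td) and t ≥ 0: g̃(t) ≤ -λ² + λ²t + (t²L/2)·m^{-3/2}·λ³, assuming m‖d‖² ≤ λ². -/
set_option maxHeartbeats 800000
set_option synthInstance.maxHeartbeats 200000


open RealInnerProductSpace

theorem gtilde_upper_bound {n : ℕ} (f : EuclideanSpace ℝ (Fin n) → ℝ)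
    (m L lam : ℝ) (hm : 0 < m) (hL : 0 ≤ L) (hlam : 0 ≤ lam)
    (hf : ContDiff ℝ 2 f)
    (hlip : ∀ u w : EuclideanSpace ℝ (Fin n),
      ‖fderiv ℝ (gradient f) u - fderiv ℝ (gradient f) w‖ ≤ L * ‖u - w‖)
    (u d : EuclideanSpace ℝ (Fin n))
    (hd : fderiv ℝ (gradient f) u d = - gradient f u)
    (hlam2 : lam ^ 2 = ⟪fderiv ℝ (gradient f) u d, d⟫)
    (hstrong : m * ‖d‖ ^ 2 ≤ lam ^ 2)
    (g : ℝ → ℝ) (hg : ∀ t, g t = ⟪gradient f (u + t • d), d⟫)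
    (t : ℝ) (ht : 0 ≤ t) :
    g t ≤ -lam ^ 2 + lam ^ 2 * t +
      (t ^ 2 * L / 2) * (Real.sqrt m ^ 3)⁻¹ * lam ^ 3 := by
  set c : ℝ := (Real.sqrt m ^ 3)⁻¹ with hc
  have hsm : 0 < Real.sqrt m := Real.sqrt_pos.mpr hm
  have hc0 : 0 ≤ c := by positivity
  -- gradient is differentiable
  have h21 : (2 : WithTop ℕ∞) = 1 + 1 := by norm_num
  have hf1 : ContDiff ℝ 1 (fderiv ℝ f) := by
    rw [h21, contDiff_succ_iff_fderiv] at hf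
    exact hf.2.2
  have hgrad : Differentiable ℝ (gradient f) := by
    have h := ((InnerProductSpace.toDual ℝ
      (EuclideanSpace ℝ (Fin n))).symm.toContinuousLinearEquiv.differentiable).comp
      (hf1.differentiable one_ne_zero)
    exact h
  -- derivative of g
  have hgder : ∀ s : ℝ, HasDerivAt g
      ⟪fderiv ℝ (gradient f) (u + s • d) d, d⟫ s := by
    intro s
    have hcurve : HasDerivAt (fun t : ℝ => u + t • d) d s := by
      simpa using ((hasDerivAt_id s).smul_const d).const_add u
    have hG : HasDerivAt (fun t : ℝ => gradient f (u + t • d))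
        (fderiv ℝ (gradient f) (u + s • d) d) s :=
      ((hgrad _).hasFDerivAt).comp_hasDerivAt s hcurve
    have := hG.inner ℝ (hasDerivAt_const s d)
    have hgeq : g = fun t : ℝ => ⟪gradient f (u + t • d), d⟫ := funext hg
    rw [hgeq]
    simpa using this
  -- bound on ‖d‖^3
  have hdlam : ‖d‖ ≤ lam / Real.sqrt m := by
    have h1 : ‖d‖ ^ 2 ≤ lam ^ 2 / m := by
      rw [le_div_iff₀ hm]; nlinarith [hstrong]
    calc ‖d‖ = Real.sqrt (‖d‖ ^ 2) := (Real.sqrt_sq (norm_nonneg d)).symm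
      _ ≤ Real.sqrt (lam ^ 2 / m) := Real.sqrt_le_sqrt h1
      _ = lam / Real.sqrt m := by
          rw [Real.sqrt_div (sq_nonneg lam) m, Real.sqrt_sq hlam]
  have hd3 : ‖d‖ ^ 3 ≤ c * lam ^ 3 := by
    have h1 : ‖d‖ ^ 3 ≤ (lam / Real.sqrt m) ^ 3 :=
      pow_le_pow_left₀ (norm_nonneg d) hdlam 3
    calc ‖d‖ ^ 3 ≤ (lam / Real.sqrt m) ^ 3 := h1
      _ = c * lam ^ 3 := by rw [div_pow, hc]; ring
  -- bound on derivative
  have hderbound : ∀ s : ℝ, 0 ≤ s →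
      ⟪fderiv ℝ (gradient f) (u + s • d) d, d⟫ ≤ lam ^ 2 + s * L * c * lam ^ 3 := by
    intro s hs
    set A := fderiv ℝ (gradient f) (u + s • d)
    set B := fderiv ℝ (gradient f) u
    have hsplit : ⟪A d, d⟫ = ⟪B d, d⟫ + ⟪(A - B) d, d⟫ := by
      simp [inner_sub_left]
    have hAB : ‖A - B‖ ≤ L * (s * ‖d‖) := by
      have := hlip (u + s • d) u
      simpa [norm_smul, abs_of_nonneg hs] using this
    have hbnd : ⟪(A - B) d, d⟫ ≤ L * (s * ‖d‖) * ‖d‖ ^ 2 := by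
      calc ⟪(A - B) d, d⟫ ≤ ‖(A - B) d‖ * ‖d‖ := real_inner_le_norm _ _
        _ ≤ ‖A - B‖ * ‖d‖ * ‖d‖ := by
            gcongr; exact ContinuousLinearMap.le_opNorm _ _
        _ ≤ L * (s * ‖d‖) * ‖d‖ * ‖d‖ := by gcongr
        _ = L * (s * ‖d‖) * ‖d‖ ^ 2 := by ring
    have h2 : L * (s * ‖d‖) * ‖d‖ ^ 2 = s * L * ‖d‖ ^ 3 := by ring
    have h3 : s * L * ‖d‖ ^ 3 ≤ s * L * (c * lam ^ 3) := by
      have : 0 ≤ s * L := mul_nonneg hs hL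
      exact mul_le_mul_of_nonneg_left hd3 this
    rw [hsplit, ← hlam2]
    nlinarith [hbnd]
  -- g 0 = -lam^2
  have hg0 : g 0 = -lam ^ 2 := by
    rw [hg 0]
    have : gradient f u = -(fderiv ℝ (gradient f) u d) := by rw [hd]; simp
    simp only [zero_smul, add_zero, this, inner_neg_left]
    rw [← hlam2]
  -- monotone auxiliary function
  set φ : ℝ → ℝ := fun s => lam ^ 2 * s + (s ^ 2 * L / 2) * c * lam ^ 3 - g s with hφ
  have hφder : ∀ s : ℝ, HasDerivAt φ
      (lam ^ 2 + s * L * c * lam ^ 3 - ⟪fderiv ℝ (gradient f) (u + s • d) d, d⟫) s := by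
    intro s
    have h1 : HasDerivAt (fun s : ℝ => lam ^ 2 * s) (lam ^ 2) s := by
      simpa using (hasDerivAt_id s).const_mul (lam ^ 2)
    have h2 : HasDerivAt (fun s : ℝ => (s ^ 2 * L / 2) * c * lam ^ 3)
        (s * L * c * lam ^ 3) s := by
      have : HasDerivAt (fun s : ℝ => s ^ 2) (2 * s) s := by
        simpa using hasDerivAt_pow 2 s
      have := ((this.mul_const L).div_const 2).mul_const c |>.mul_const (lam ^ 3)
      exact this.congr_deriv (by ring)
    exact (h1.add h2).sub (hgder s)
  have hmono : MonotoneOn φ (Set.Icc 0 t) := by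
    apply monotoneOn_of_deriv_nonneg (convex_Icc 0 t)
    · have hφdiff : Differentiable ℝ φ := fun s => (hφder s).differentiableAt
      exact hφdiff.continuous.continuousOn
    · intro s hs
      exact ((hφder s).differentiableAt).differentiableWithinAt
    · intro s hs
      rw [(hφder s).deriv]
      have hs0 : 0 ≤ s := (interior_subset hs).1
      linarith [hderbound s hs0]
  have hfinal := hmono (Set.left_mem_Icc.mpr ht) (Set.right_mem_Icc.mpr ht) ht
  simp only [hφ] at hfinal
  have : lam ^ 2 * 0 + (0 ^ 2 * L / 2) * c * lam ^ 3 - g 0 = lam ^ 2 := by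
    rw [hg0]; ring
  rw [this] at hfinal
  linarith [hfinal]
end

section
/- Suppose h : ℝⁿ → ℝᵐ is locally Lipschitz on each member of a finite cover of a convex compact set S by closed sets, with a uniform Lipschitz constant L₀ on each piece, and h is continuous on S. Then h is Lipschitz on S with constant L₀. -/
theorem lipschitz_on_finite_closed_cover {n k : ℕ} {ι : Type*} [Finite ι]
    (h : EuclideanSpace ℝ (Fin n) → EuclideanSpace ℝ (Fin k))
    (S : Set (EuclideanSpace ℝ (Fin n))) (hSconv : Convex ℝ S) (hScomp : IsCompact S)
    (P : ι → Set (EuclideanSpace ℝ (Fin n))) (hPclosed : ∀ i, IsClosed (P i))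
    (hcover : S ⊆ ⋃ i, P i) (L₀ : NNReal)
    (hlip : ∀ i, LipschitzOnWith L₀ h (P i ∩ S))
    (hcont : ContinuousOn h S) :
    LipschitzOnWith L₀ h S := by
  rw [lipschitzOnWith_iff_dist_le_mul]
  intro x hx y hy
  set γ : ℝ →ᵃ[ℝ] EuclideanSpace ℝ (Fin n) := AffineMap.lineMap x y with hγdef
  have hγS : ∀ t ∈ Set.Icc (0 : ℝ) 1, γ t ∈ S := fun t ht => hSconv.lineMap_mem hx hy ht
  have hγcont : Continuous γ := AffineMap.lineMap_continuous
  set A : Set ℝ :=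
    {t | t ∈ Set.Icc (0 : ℝ) 1 ∧ dist (h x) (h (γ t)) ≤ (L₀ : ℝ) * (t * dist x y)} with hAdef
  have h0A : (0 : ℝ) ∈ A := by
    refine ⟨⟨le_refl _, zero_le_one⟩, ?_⟩
    simp [hγdef]
  have hAbdd : BddAbove A := ⟨1, fun t ht => ht.1.2⟩
  have hAclosed : IsClosed A := by
    have hcγ : ContinuousOn (fun t : ℝ => dist (h x) (h (γ t)) - (L₀ : ℝ) * (t * dist x y))
        (Set.Icc (0 : ℝ) 1) := by
      apply ContinuousOn.sub
      · exact (continuous_const.dist continuous_id).comp_continuousOn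
          (hcont.comp hγcont.continuousOn (fun t ht => hγS t ht))
      · exact (continuous_const.mul (continuous_id.mul continuous_const)).continuousOn
    have := hcγ.preimage_isClosed_of_isClosed isClosed_Icc (isClosed_Iic (a := (0 : ℝ)))
    convert this using 1
    ext t
    simp only [hAdef, Set.mem_setOf_eq, Set.mem_inter_iff, Set.mem_preimage, Set.mem_Iic]
    constructor
    · rintro ⟨h1, h2⟩; exact ⟨h1, by linarith⟩
    · rintro ⟨h1, h2⟩; exact ⟨h1, by linarith⟩
  set m : ℝ := sSup A with hmdef
  have hmA : m ∈ A := hAclosed.csSup_mem ⟨0, h0A⟩ hAbdd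
  have hm1 : m = 1 := by
    by_contra hne
    have hmlt : m < 1 := lt_of_le_of_ne hmA.1.2 hne
    -- m is in the closure of (m,1], which is covered by the closed sets γ ⁻¹' P i
    have hsub : Set.Ioc m 1 ⊆ ⋃ i, (γ ⁻¹' P i ∩ Set.Ioc m 1) := by
      intro t ht
      have htS : γ t ∈ S := hγS t ⟨le_trans hmA.1.1 ht.1.le, ht.2⟩
      obtain ⟨U, ⟨i, rfl⟩, hti⟩ := hcover htS
      exact Set.mem_iUnion.2 ⟨i, hti, ht⟩
    have hmcl : m ∈ closure (Set.Ioc m 1) := by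
      rw [closure_Ioc hmlt.ne]
      exact ⟨le_refl _, hmlt.le⟩
    have : m ∈ ⋃ i, closure (γ ⁻¹' P i ∩ Set.Ioc m 1) := by
      rw [← closure_iUnion_of_finite]
      exact closure_mono hsub hmcl
    obtain ⟨V, ⟨j, rfl⟩, hmj⟩ := this
    have hmPj : γ m ∈ P j := by
      have : m ∈ closure (γ ⁻¹' P j) :=
        closure_mono (Set.inter_subset_left) hmj
      have hcl : IsClosed (γ ⁻¹' P j) := (hPclosed j).preimage hγcont
      exact hcl.closure_subset this
    obtain ⟨u, huPj, humem⟩ : (γ ⁻¹' P j ∩ Set.Ioc m 1).Nonempty :=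
      closure_nonempty_iff.mp ⟨m, hmj⟩
    have huIcc : u ∈ Set.Icc (0 : ℝ) 1 := ⟨le_trans hmA.1.1 humem.1.le, humem.2⟩
    have hstep : dist (h (γ m)) (h (γ u)) ≤ (L₀ : ℝ) * ((u - m) * dist x y) := by
      have := (hlip j).dist_le_mul (γ m) ⟨hmPj, hγS m hmA.1⟩ (γ u) ⟨huPj, hγS u huIcc⟩
      have hd : dist (γ m) (γ u) = (u - m) * dist x y := by
        rw [hγdef]
        rw [dist_lineMap_lineMap]
        congr 1
        rw [Real.dist_eq, abs_sub_comm, abs_of_nonneg (by linarith [humem.1])]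
      rwa [hd] at this
    have huA : u ∈ A := by
      refine ⟨huIcc, ?_⟩
      calc dist (h x) (h (γ u)) ≤ dist (h x) (h (γ m)) + dist (h (γ m)) (h (γ u)) :=
            dist_triangle _ _ _
        _ ≤ (L₀ : ℝ) * (m * dist x y) + (L₀ : ℝ) * ((u - m) * dist x y) :=
            add_le_add hmA.2 hstep
        _ = (L₀ : ℝ) * (u * dist x y) := by ring
    exact absurd (le_csSup hAbdd huA) (not_le.2 humem.1)
  have h1A : (1 : ℝ) ∈ A := hm1 ▸ hmA
  have : γ (1 : ℝ) = y := by simp [hγdef]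
  have := h1A.2
  rw [‹γ (1 : ℝ) = y›] at this
  linarith [this]
end
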